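/- arXiv:math/9904041 — 4 statements merged into one kernel-verified Lean document; each statement's English description precedes it below -/
import Mathlib

section
/- Let μ : M → P and ν : N → P be crossed modules over P. In the nonabelian tensor product M ⊗ N (generated by symbols m ⊗ n subject to mm' ⊗ n = (ᵐm' ⊗ ᵐn)(m ⊗ n) and m ⊗ nn' = (m ⊗ n)(ⁿm ⊗ ⁿn')), the maps λ : M ⊗ N → M and λ' : M ⊗ N → N determined on generators by λ(m ⊗ n) = m (ⁿm)⁻¹ and λ'(m ⊗ n) = (ᵐn) n⁻¹ are well-defined group homomorphisms. -/
/-- The defining relations of the nonabelian tensor product `M ⊗ N` of two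
crossed modules `μ : M → P`, `ν : N → P`, as relators in the free group on the
symbols `m ⊗ n` (encoded as pairs `(m, n)`).  The mutual actions are
`ᵐm' = ^{μm}m'`, `ᵐn = ^{μm}n`, `ⁿm = ^{νn}m`, `ⁿn' = ^{νn}n'`. -/
def tensorRels {M N P : Type*} [Group M] [Group N] [Group P]
    (μ : M →* P) (ν : N →* P) (φ : P →* MulAut M) (ψ : P →* MulAut N) :
    Set (FreeGroup (M × N)) :=
  {r | (∃ m m' n, r = FreeGroup.of (m * m', n) *
          (FreeGroup.of (φ (μ m) m', ψ (μ m) n) * FreeGroup.of (m, n))⁻¹) ∨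
       (∃ m n n', r = FreeGroup.of (m, n * n') *
          (FreeGroup.of (m, n) * FreeGroup.of (φ (ν n) m, ψ (ν n) n'))⁻¹)}

/-- For crossed modules `μ : M → P` and `ν : N → P`, the maps
`λ(m ⊗ n) = m (ⁿm)⁻¹` and `λ'(m ⊗ n) = (ᵐn) n⁻¹` are well defined on the
nonabelian tensor product `M ⊗ N`, i.e. they extend to group homomorphisms on
the presented group. -/
theorem tensor_lambda_welldefined {M N P : Type*} [Group M] [Group N] [Group P]
    (μ : M →* P) (ν : N →* P) (φ : P →* MulAut M) (ψ : P →* MulAut N)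
    (hμeq : ∀ (p : P) (m : M), μ (φ p m) = p * μ m * p⁻¹)
    (hμpf : ∀ m m' : M, φ (μ m) m' = m * m' * m⁻¹)
    (hνeq : ∀ (p : P) (n : N), ν (ψ p n) = p * ν n * p⁻¹)
    (hνpf : ∀ n n' : N, ψ (ν n) n' = n * n' * n⁻¹) :
    ∃ (lam : PresentedGroup (tensorRels μ ν φ ψ) →* M)
      (lam' : PresentedGroup (tensorRels μ ν φ ψ) →* N),
      (∀ (m : M) (n : N),
        lam (PresentedGroup.of (m, n)) = m * (φ (ν n) m)⁻¹) ∧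
      (∀ (m : M) (n : N),
        lam' (PresentedGroup.of (m, n)) = ψ (μ m) n * n⁻¹) := by
  -- conjugation lemmas
  have keyM : ∀ (p q : P) (m : M), φ (p * q * p⁻¹) (φ p m) = φ p (φ q m) := by
    intro p q m
    simp [map_mul]
  have keyN : ∀ (p q : P) (n : N), ψ (p * q * p⁻¹) (ψ p n) = ψ p (ψ q n) := by
    intro p q n
    simp [map_mul]
  set f : M × N → M := fun x => x.1 * (φ (ν x.2) x.1)⁻¹ with hf
  set g : M × N → N := fun x => ψ (μ x.1) x.2 * x.2⁻¹ with hg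
  have hfrel : ∀ r ∈ tensorRels μ ν φ ψ, FreeGroup.lift f r = 1 := by
    rintro r (⟨m, m', n, rfl⟩ | ⟨m, n, n', rfl⟩) <;>
      simp only [map_mul, map_inv, FreeGroup.lift_apply_of, hf, mul_inv_eq_one]
    · have h1 : φ (ν (ψ (μ m) n)) (φ (μ m) m') = φ (μ m) (φ (ν n) m') := by
        rw [hνeq]; exact keyM _ _ _
      rw [h1, hμpf m m', hμpf m (φ (ν n) m')]
      simp [map_mul, mul_assoc]
    · have h1 : φ (ν (ψ (ν n) n')) (φ (ν n) m) = φ (ν n) (φ (ν n') m) := by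
        rw [hνeq]; exact keyM _ _ _
      rw [h1]
      simp [map_mul, mul_assoc]
  have hgrel : ∀ r ∈ tensorRels μ ν φ ψ, FreeGroup.lift g r = 1 := by
    rintro r (⟨m, m', n, rfl⟩ | ⟨m, n, n', rfl⟩) <;>
      simp only [map_mul, map_inv, FreeGroup.lift_apply_of, hg, mul_inv_eq_one]
    · have h1 : ψ (μ (φ (μ m) m')) (ψ (μ m) n) = ψ (μ m) (ψ (μ m') n) := by
        rw [hμeq]; exact keyN _ _ _
      rw [h1]
      simp [map_mul, mul_assoc]
    · have h1 : ψ (μ (φ (ν n) m)) (ψ (ν n) n') = ψ (ν n) (ψ (μ m) n') := by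
        rw [hμeq]; exact keyN _ _ _
      rw [h1, hνpf n n', hνpf n (ψ (μ m) n')]
      simp [map_mul, mul_assoc]
  refine ⟨PresentedGroup.toGroup hfrel, PresentedGroup.toGroup hgrel, ?_, ?_⟩ <;>
    intro m n <;> simp [PresentedGroup.toGroup.of, hf, hg]
end

section
/- Let G be a simplicial group whose Moore complex NG has length 1 (i.e. NGₙ = 1 for n ≥ 2). Then ∂₁ : NG₁ → NG₀ = G₀, with G₀ acting on NG₁ by conjugation via the degeneracy s₀ (i.e. ᵍx = s₀(g) x s₀(g)⁻¹), is a crossed module: ∂₁(ᵍx) = g ∂₁(x) g⁻¹ and ^{∂₁x}y = x y x⁻¹ for all x, y ∈ NG₁, g ∈ G₀. -/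
/-- Let `G` be a simplicial group (face maps `d n i : G (n+1) → G n`,
degeneracies `s n i : G n → G (n+1)`, simplicial identities) whose Moore
complex has length 1, i.e. `NGₙ = 1` for `n ≥ 2`.  Then
`∂₁ = d 0 1 : NG₁ = Ker (d 0 0) → G₀`, with `G₀` acting on `NG₁` by conjugation
via the degeneracy `s₀` (`ᵍx = s₀(g) x s₀(g)⁻¹`), is a crossed module: the
action preserves `NG₁`, `∂₁(ᵍx) = g ∂₁(x) g⁻¹`, and `^{∂₁x}y = x y x⁻¹`. -/
theorem moore_length_one_crossed_module {G : ℕ → Type*} [∀ n, Group (G n)]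
    (d : ∀ n : ℕ, ℕ → (G (n + 1) →* G n))
    (s : ∀ n : ℕ, ℕ → (G n →* G (n + 1)))
    (dd : ∀ (n i j : ℕ), i ≤ j → j ≤ n + 1 → ∀ x : G (n + 2),
      d n i (d (n + 1) (j + 1) x) = d n j (d (n + 1) i x))
    (ds_eq : ∀ (n j : ℕ) (x : G n), d n j (s n j x) = x)
    (ds_eq' : ∀ (n j : ℕ) (x : G n), d n (j + 1) (s n j x) = x)
    (ds_lt : ∀ (n i k : ℕ), i ≤ k → ∀ x : G (n + 1),
      d (n + 1) i (s (n + 1) (k + 1) x) = s n k (d n i x))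
    (ds_gt : ∀ (n j k : ℕ), j ≤ k → ∀ x : G (n + 1),
      d (n + 1) (k + 2) (s (n + 1) j x) = s n j (d n (k + 1) x))
    (ss : ∀ (n i j : ℕ), i ≤ j → ∀ x : G n,
      s (n + 1) i (s n j x) = s (n + 1) (j + 1) (s n i x))
    -- the Moore complex has length 1: `NGₙ` is trivial for all `n ≥ 2`
    (hlen : ∀ (n : ℕ) (x : G (n + 2)), (∀ i ≤ n + 1, d (n + 1) i x = 1) → x = 1) :
    ∀ (g : G 0) (x y : G 1), d 0 0 x = 1 → d 0 0 y = 1 →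
      (d 0 0 (s 0 0 g * x * (s 0 0 g)⁻¹) = 1) ∧
      (d 0 1 (s 0 0 g * x * (s 0 0 g)⁻¹) = g * d 0 1 x * g⁻¹) ∧
      (s 0 0 (d 0 1 x) * y * (s 0 0 (d 0 1 x))⁻¹ = x * y * x⁻¹) := by
  intro g x y hx hy
  have hdg0 : d 0 0 (s 0 0 g) = g := ds_eq 0 0 g
  have hdg1 : d 0 1 (s 0 0 g) = g := ds_eq' 0 0 g
  refine ⟨by simp [hdg0, hx], by simp [hdg1], ?_⟩
  -- the Peiffer element
  set a : G 2 := s 1 1 x with ha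
  set b : G 2 := s 1 1 y with hb
  set c : G 2 := s 1 0 x with hc
  have ha0 : d 1 0 a = 1 := by rw [ha, ds_lt 0 0 0 le_rfl, hx, map_one]
  have hb0 : d 1 0 b = 1 := by rw [hb, ds_lt 0 0 0 le_rfl, hy, map_one]
  have ha1 : d 1 1 a = x := ds_eq 1 1 x
  have hb1 : d 1 1 b = y := ds_eq 1 1 y
  have ha2 : d 1 2 a = x := ds_eq' 1 1 x
  have hb2 : d 1 2 b = y := ds_eq' 1 1 y
  have hc0 : d 1 0 c = x := ds_eq 1 0 x
  have hc1 : d 1 1 c = x := ds_eq' 1 0 x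
  have hc2 : d 1 2 c = s 0 0 (d 0 1 x) := ds_gt 0 0 0 le_rfl x
  have hz : c * b * c⁻¹ * a * b⁻¹ * a⁻¹ = 1 := by
    apply hlen 0
    intro i hi
    interval_cases i
    · simp [hc0, hb0, ha0]
    · simp [hc1, hb1, ha1]
  have := congrArg (d 1 2) hz
  simp only [map_mul, map_inv, map_one, hc2, hb2, ha2] at this
  have h : (s 0 0 (d 0 1 x) * y * (s 0 0 (d 0 1 x))⁻¹) * (x * y⁻¹ * x⁻¹) = 1 := by
    rw [← this]; group
  rw [mul_eq_one_iff_eq_inv] at h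
  rw [h]; group
end

section
/- Let G be a simplicial group. In the crossed square M(G,2) with corner groups L = NG₂/∂₃(NG₃), M = Ker d₀¹, N = Ker d₁¹, P = G₁, the kernel of the morphism of crossed modules μ₁ : (L → N) → (M → P) is isomorphic to (π₂(G) → 1); explicitly, Ker(L → N) = (NG₂ ∩ Ker d₂²)/∂₃(NG₃) ≅ π₂(G), and Ker(M → P) is trivial. -/
section

variable {G : ℕ → Type*} [∀ n, Group (G n)] (d : ∀ n : ℕ, ℕ → (G (n + 1) →* G n))

/-- `NG₂ = Ker d₀² ∩ Ker d₁²`. -/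
def mooreTwo : Subgroup (G 2) := (d 1 0).ker ⊓ (d 1 1).ker

/-- `∂₃(NG₃) = d₃³(Ker d₀³ ∩ Ker d₁³ ∩ Ker d₂³)`. -/
def boundaryThree : Subgroup (G 2) :=
  Subgroup.map (d 2 3) ((d 2 0).ker ⊓ (d 2 1).ker ⊓ (d 2 2).ker)

/-- `∩_{i=0}^{2} Ker dᵢ² = NG₂ ∩ Ker d₂²`, the numerator of `π₂(G)`. -/
def mooreTwoCap : Subgroup (G 2) := mooreTwo d ⊓ (d 1 2).ker

/-!
The face identities `dᵢ d₃ = d₂ dᵢ` (`i ≤ 2`) send `NG₃` into `NG₂ ∩ Ker d₂²`. Conjugation by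
`g ∈ NG₂` preserves `∂₃(NG₃)` because it lifts to conjugation by the degeneracy `s₂ g`, which
lies in `Ker d₀³ ∩ Ker d₁³` and is sent to `g` by both `d₂³` and `d₃³`. The kernel of the map
`NG₂/∂₃(NG₃) → G₁` induced by `d₂²` is then the image of `NG₂ ∩ Ker d₂²` in the quotient.
-/

namespace QuotientGroup

variable {G Q : Type*} [Group G] [Group Q] {H : Subgroup G} (f : G →* Q)
  (N : Subgroup H) [N.Normal] (hN : N ≤ (f.comp H.subtype).ker)

def infKerToKerLift : ↥(H ⊓ f.ker) →* (lift N (f.comp H.subtype) hN).ker :=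
  ((mk' N).comp (Subgroup.inclusion inf_le_left)).codRestrict _ fun x => x.2.2

theorem infKerToKerLift_surjective : Function.Surjective (infKerToKerLift f N hN) := by
  rintro ⟨q, hq⟩
  obtain ⟨y, rfl⟩ := mk_surjective q
  exact ⟨⟨y, y.2, hq⟩, rfl⟩

theorem ker_infKerToKerLift :
    (infKerToKerLift f N hN).ker = N.comap (Subgroup.inclusion inf_le_left) := by
  ext x
  rw [MonoidHom.mem_ker, ← Subtype.val_inj]
  exact eq_one_iff _

-- `N'` is a parameter so that the quotient may be presented by any subgroup equal to the
-- restriction of `N`, such as a normal closure, without transporting along an equality of types.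
noncomputable def kerLiftEquiv (N' : Subgroup ↥(H ⊓ f.ker)) [N'.Normal]
    (hN' : N' = N.comap (Subgroup.inclusion inf_le_left)) :
    (lift N (f.comp H.subtype) hN).ker ≃* ↥(H ⊓ f.ker) ⧸ N' :=
  (liftEquiv N' (infKerToKerLift_surjective f N hN)
    (hN'.trans (ker_infKerToKerLift f N hN).symm)).symm

end QuotientGroup

theorem boundaryThree_le_mooreTwoCap
    (dd : ∀ (n i j : ℕ), i ≤ j → j ≤ n + 1 → ∀ x : G (n + 2),
      d n i (d (n + 1) (j + 1) x) = d n j (d (n + 1) i x)) :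
    boundaryThree d ≤ mooreTwoCap d := by
  rintro _ ⟨x, ⟨⟨hx0, hx1⟩, hx2⟩, rfl⟩
  have face_boundary (i : ℕ) (hi : i ≤ 2) (hx : d 2 i x = 1) : d 1 i (d 2 3 x) = 1 := by
    rw [dd 1 i 2 hi le_rfl x, hx, map_one]
  exact ⟨⟨face_boundary 0 (by norm_num) hx0, face_boundary 1 (by norm_num) hx1⟩,
    face_boundary 2 le_rfl hx2⟩

theorem conj_mem_boundaryThree {s : ∀ n : ℕ, ℕ → (G n →* G (n + 1))}
    (ds_eq : ∀ (n j : ℕ) (x : G n), d n j (s n j x) = x)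
    (ds_eq' : ∀ (n j : ℕ) (x : G n), d n (j + 1) (s n j x) = x)
    (ds_lt : ∀ (n i k : ℕ), i ≤ k → ∀ x : G (n + 1),
      d (n + 1) i (s (n + 1) (k + 1) x) = s n k (d n i x))
    {g y : G 2} (hg : g ∈ mooreTwo d) (hy : y ∈ boundaryThree d) :
    g * y * g⁻¹ ∈ boundaryThree d := by
  obtain ⟨hg0, hg1⟩ : d 1 0 g = 1 ∧ d 1 1 g = 1 := hg
  obtain ⟨z, hz, rfl⟩ := hy
  obtain ⟨⟨hz0, hz1⟩, hz2⟩ : (d 2 0 z = 1 ∧ d 2 1 z = 1) ∧ d 2 2 z = 1 := hz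
  have hs0 : d 2 0 (s 2 2 g) = 1 := by rw [ds_lt 1 0 1 zero_le_one, hg0, map_one]
  have hs1 : d 2 1 (s 2 2 g) = 1 := by rw [ds_lt 1 1 1 le_rfl, hg1, map_one]
  refine ⟨s 2 2 g * z * (s 2 2 g)⁻¹, ?_, by simp only [map_mul, map_inv, ds_eq' 2 2]⟩
  show (d 2 0 _ = 1 ∧ d 2 1 _ = 1) ∧ d 2 2 _ = 1
  simp only [map_mul, map_inv, hs0, hs1, ds_eq 2 2, hz0, hz1, hz2, mul_one, inv_one,
    mul_inv_cancel, and_self]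

theorem crossed_square_kernel_pi_two_general {G : ℕ → Type*} [∀ n, Group (G n)]
    (d : ∀ n : ℕ, ℕ → (G (n + 1) →* G n))
    (s : ∀ n : ℕ, ℕ → (G n →* G (n + 1)))
    (dd : ∀ (n i j : ℕ), i ≤ j → j ≤ n + 1 → ∀ x : G (n + 2),
      d n i (d (n + 1) (j + 1) x) = d n j (d (n + 1) i x))
    (ds_eq : ∀ (n j : ℕ) (x : G n), d n j (s n j x) = x)
    (ds_eq' : ∀ (n j : ℕ) (x : G n), d n (j + 1) (s n j x) = x)
    (ds_lt : ∀ (n i k : ℕ), i ≤ k → ∀ x : G (n + 1),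
      d (n + 1) i (s (n + 1) (k + 1) x) = s n k (d n i x)) :
    -- `∂₃(NG₃) ⊆ NG₂ ∩ Ker d₂²`
    boundaryThree d ≤ mooreTwoCap d ∧
    -- `∂₃(NG₃)` is normal in `NG₂`
    Subgroup.closure {x : ↥(mooreTwo d) | (x : G 2) ∈ boundaryThree d}
      = Subgroup.normalClosure {x : ↥(mooreTwo d) | (x : G 2) ∈ boundaryThree d} ∧
    -- the induced map `L = NG₂/∂₃NG₃ → N` has kernel `(NG₂ ∩ Ker d₂²)/∂₃NG₃ ≅ π₂(G)`
    (∃ ψ : (↥(mooreTwo d) ⧸ Subgroup.normalClosure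
        {x : ↥(mooreTwo d) | (x : G 2) ∈ boundaryThree d}) →* G 1,
      (∀ x : ↥(mooreTwo d), ψ (QuotientGroup.mk x) = d 1 2 (x : G 2)) ∧
      (∀ q, ψ q = 1 ↔ ∃ x : ↥(mooreTwo d),
        QuotientGroup.mk x = q ∧ d 1 2 (x : G 2) = 1) ∧
      Nonempty (↥ψ.ker ≃* (↥(mooreTwoCap d) ⧸ Subgroup.normalClosure
        {x : ↥(mooreTwoCap d) | (x : G 2) ∈ boundaryThree d}))) ∧
    -- `Ker (M → P)` is trivial: the inclusion `Ker d₀¹ → G₁` is injective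
    Function.Injective ((d 0 0).ker.subtype) := by
  have hB := boundaryThree_le_mooreTwoCap d dd
  have normal_of_le {C : Subgroup (G 2)} (hBC : boundaryThree d ≤ C) (hC : C ≤ mooreTwo d) :
      ((boundaryThree d).subgroupOf C).Normal :=
    (Subgroup.normal_subgroupOf_iff hBC).2 fun _ _ hy hg =>
      conj_mem_boundaryThree d ds_eq ds_eq' ds_lt (hC hg) hy
  have := normal_of_le (hB.trans inf_le_left) le_rfl
  have := normal_of_le hB inf_le_left
  have hS : Subgroup.normalClosure {x : ↥(mooreTwo d) | (x : G 2) ∈ boundaryThree d} =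
      (boundaryThree d).subgroupOf (mooreTwo d) :=
    Subgroup.normalClosure_eq_self ((boundaryThree d).subgroupOf (mooreTwo d))
  have hS' : Subgroup.normalClosure {x : ↥(mooreTwoCap d) | (x : G 2) ∈ boundaryThree d} =
      (boundaryThree d).subgroupOf (mooreTwoCap d) :=
    Subgroup.normalClosure_eq_self ((boundaryThree d).subgroupOf (mooreTwoCap d))
  have hker : Subgroup.normalClosure {x : ↥(mooreTwo d) | (x : G 2) ∈ boundaryThree d} ≤
      ((d 1 2).comp (mooreTwo d).subtype).ker := fun x hx => (hB (hS.le hx)).2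
  refine ⟨hB, (Subgroup.closure_eq ((boundaryThree d).subgroupOf (mooreTwo d))).trans hS.symm,
    ⟨QuotientGroup.lift _ _ hker, fun _ => rfl, fun q => ?_,
      ⟨QuotientGroup.kerLiftEquiv (d 1 2) _ hker (Subgroup.normalClosure _)
        (by rw [hS]; exact hS')⟩⟩,
    Subgroup.subtype_injective _⟩
  induction q using QuotientGroup.induction_on with
  | H x => exact ⟨fun hx => ⟨x, rfl, hx⟩, by rintro ⟨y, hy, hy1⟩; rw [← hy]; exact hy1⟩

/-- For a simplicial group `G`, in the crossed square `M(G,2)` with corner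
groups `L = NG₂/∂₃(NG₃)`, `M = Ker d₀¹`, `N = Ker d₁¹`, `P = G₁`: the kernel of
the morphism of crossed modules `μ₁ : (L → N) → (M → P)` is `(π₂(G) → 1)`.
Explicitly: `∂₃(NG₃)` is a normal subgroup of `NG₂` contained in
`NG₂ ∩ Ker d₂²`; the map `L → N` induced by `d₂²` has kernel
`(NG₂ ∩ Ker d₂²)/∂₃(NG₃) ≅ π₂(G)`; and `M → P`, being an inclusion, has trivial
kernel. -/
theorem crossed_square_kernel_pi_two {G : ℕ → Type*} [∀ n, Group (G n)]
    (d : ∀ n : ℕ, ℕ → (G (n + 1) →* G n))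
    (s : ∀ n : ℕ, ℕ → (G n →* G (n + 1)))
    (dd : ∀ (n i j : ℕ), i ≤ j → j ≤ n + 1 → ∀ x : G (n + 2),
      d n i (d (n + 1) (j + 1) x) = d n j (d (n + 1) i x))
    (ds_eq : ∀ (n j : ℕ) (x : G n), d n j (s n j x) = x)
    (ds_eq' : ∀ (n j : ℕ) (x : G n), d n (j + 1) (s n j x) = x)
    (ds_lt : ∀ (n i k : ℕ), i ≤ k → ∀ x : G (n + 1),
      d (n + 1) i (s (n + 1) (k + 1) x) = s n k (d n i x))
    (ds_gt : ∀ (n j k : ℕ), j ≤ k → ∀ x : G (n + 1),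
      d (n + 1) (k + 2) (s (n + 1) j x) = s n j (d n (k + 1) x))
    (ss : ∀ (n i j : ℕ), i ≤ j → ∀ x : G n,
      s (n + 1) i (s n j x) = s (n + 1) (j + 1) (s n i x)) :
    -- `∂₃(NG₃) ⊆ NG₂ ∩ Ker d₂²`
    boundaryThree d ≤ mooreTwoCap d ∧
    -- `∂₃(NG₃)` is normal in `NG₂`
    Subgroup.closure {x : ↥(mooreTwo d) | (x : G 2) ∈ boundaryThree d}
      = Subgroup.normalClosure {x : ↥(mooreTwo d) | (x : G 2) ∈ boundaryThree d} ∧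
    -- the induced map `L = NG₂/∂₃NG₃ → N` has kernel `(NG₂ ∩ Ker d₂²)/∂₃NG₃ ≅ π₂(G)`
    (∃ ψ : (↥(mooreTwo d) ⧸ Subgroup.normalClosure
        {x : ↥(mooreTwo d) | (x : G 2) ∈ boundaryThree d}) →* G 1,
      (∀ x : ↥(mooreTwo d), ψ (QuotientGroup.mk x) = d 1 2 (x : G 2)) ∧
      (∀ q, ψ q = 1 ↔ ∃ x : ↥(mooreTwo d),
        QuotientGroup.mk x = q ∧ d 1 2 (x : G 2) = 1) ∧
      Nonempty (↥ψ.ker ≃* (↥(mooreTwoCap d) ⧸ Subgroup.normalClosure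
        {x : ↥(mooreTwoCap d) | (x : G 2) ∈ boundaryThree d}))) ∧
    -- `Ker (M → P)` is trivial: the inclusion `Ker d₀¹ → G₁` is injective
    Function.Injective ((d 0 0).ker.subtype) :=
  crossed_square_kernel_pi_two_general d s dd ds_eq ds_eq' ds_lt

end
end

section
/- Let G be a simplicial group. The cokernel of the morphism of crossed modules μ₁ : (NG₂/∂₃NG₃ → Ker d₁¹) → (Ker d₀¹ → G₁) is the crossed module M(G,1) = (NG₁/∂₂NG₂ → G₀); explicitly, Ker d₀¹ / d₂²(NG₂) ≅ NG₁/∂₂NG₂ and G₁/Ker d₀¹ ≅ G₀ (the latter via d₀¹, which is surjective since s₀ splits it). -/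
section

variable {G : ℕ → Type*} [∀ n, Group (G n)] (d : ∀ n : ℕ, ℕ → (G (n + 1) →* G n))

/-- For a simplicial group `G`, the cokernel of the morphism of crossed modules
`μ₁ : (NG₂/∂₃NG₃ → Ker d₁¹) → (Ker d₀¹ → G₁)` is `M(G,1) = (NG₁/∂₂NG₂ → G₀)`.
Explicitly: `d₂²(NG₂) ⊆ Ker d₀¹ = NG₁` and is normal there, so
`Ker d₀¹ / d₂²(NG₂) = NG₁/∂₂NG₂`; and `d₀¹` is surjective (it is split by
`s₀`), inducing an isomorphism `G₁/Ker d₀¹ ≅ G₀`. -/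
theorem crossed_square_cokernel {G : ℕ → Type*} [∀ n, Group (G n)]
    (d : ∀ n : ℕ, ℕ → (G (n + 1) →* G n))
    (s : ∀ n : ℕ, ℕ → (G n →* G (n + 1)))
    (dd : ∀ (n i j : ℕ), i ≤ j → j ≤ n + 1 → ∀ x : G (n + 2),
      d n i (d (n + 1) (j + 1) x) = d n j (d (n + 1) i x))
    (ds_eq : ∀ (n j : ℕ) (x : G n), d n j (s n j x) = x)
    (ds_eq' : ∀ (n j : ℕ) (x : G n), d n (j + 1) (s n j x) = x)
    (ds_lt : ∀ (n i k : ℕ), i ≤ k → ∀ x : G (n + 1),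
      d (n + 1) i (s (n + 1) (k + 1) x) = s n k (d n i x))
    (ds_gt : ∀ (n j k : ℕ), j ≤ k → ∀ x : G (n + 1),
      d (n + 1) (k + 2) (s (n + 1) j x) = s n j (d n (k + 1) x))
    (ss : ∀ (n i j : ℕ), i ≤ j → ∀ x : G n,
      s (n + 1) i (s n j x) = s (n + 1) (j + 1) (s n i x)) :
    -- `d₂²(NG₂) = ∂₂(NG₂) ⊆ Ker d₀¹ = NG₁`
    Subgroup.map (d 1 2) (mooreTwo d) ≤ (d 0 0).ker ∧
    -- `∂₂(NG₂)` is normal in `Ker d₀¹ = NG₁`, so the quotient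
    -- `Ker d₀¹ / d₂²(NG₂) = NG₁/∂₂NG₂` makes sense
    Subgroup.closure {x : ↥((d 0 0).ker) | (x : G 1) ∈ Subgroup.map (d 1 2) (mooreTwo d)}
      = Subgroup.normalClosure
          {x : ↥((d 0 0).ker) | (x : G 1) ∈ Subgroup.map (d 1 2) (mooreTwo d)} ∧
    -- `d₀¹` is surjective, since `s₀` splits it
    Function.Surjective (d 0 0) ∧
    -- hence `G₁/Ker d₀¹ ≅ G₀`, via the map induced by `d₀¹`
    (∃ e : (G 1 ⧸ (d 0 0).ker) ≃* G 0,
      ∀ x : G 1, e (QuotientGroup.mk x) = d 0 0 x) := by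
  constructor
  · rintro y ⟨x, hx, rfl⟩
    simp only [mooreTwo, SetLike.mem_coe, Subgroup.mem_inf, MonoidHom.mem_ker] at hx
    obtain ⟨hx0, hx1⟩ := hx
    rw [MonoidHom.mem_ker]
    have := dd 0 0 1 (by norm_num) (by norm_num) x
    rw [this, hx0, map_one]
  refine ⟨?_, ?_, ?_⟩
  · -- normal closure equals closure
    set S := {x : ((d 0 0).ker) | (x : G 1) ∈ Subgroup.map (d 1 2) (mooreTwo d)} with hS
    have hnorm : (Subgroup.closure S).Normal := by
      constructor
      intro n hn g
      -- it suffices to show conjugation preserves closure S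
      induction hn using Subgroup.closure_induction with
      | mem a ha =>
        apply Subgroup.subset_closure
        obtain ⟨x, hx, hx2⟩ := ha
        simp only [mooreTwo, SetLike.mem_coe, Subgroup.mem_inf, MonoidHom.mem_ker] at hx
        obtain ⟨hx0, hx1⟩ := hx
        refine ⟨s 1 1 (g : G 1) * x * (s 1 1 (g : G 1))⁻¹,
          (Subgroup.mem_inf).2 ⟨?_, ?_⟩, ?_⟩
        · simp only [MonoidHom.mem_ker, map_mul, map_inv]
          have h1 : d 1 0 (s 1 1 (g : G 1)) = s 0 0 (d 0 0 (g : G 1)) := ds_lt 0 0 0 le_rfl _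
          rw [h1, g.2, map_one, hx0]
          simp
        · simp only [MonoidHom.mem_ker, map_mul, map_inv]
          rw [hx1]
          simp
        · have h2 : d 1 2 (s 1 1 (g : G 1)) = (g : G 1) := ds_eq' 1 1 _
          push_cast
          simp only [map_mul, map_inv, h2, hx2]
      | one => simpa using Subgroup.one_mem _
      | mul a b _ _ ha hb =>
        have : g * (a * b) * g⁻¹ = (g * a * g⁻¹) * (g * b * g⁻¹) := by group
        rw [this]; exact Subgroup.mul_mem _ ha hb
      | inv a _ ha =>
        have : g * a⁻¹ * g⁻¹ = (g * a * g⁻¹)⁻¹ := by group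
        rw [this]; exact Subgroup.inv_mem _ ha
    refine le_antisymm (Subgroup.closure_le_normalClosure) ?_
    exact Subgroup.normalClosure_le_normal Subgroup.subset_closure
  · intro x
    exact ⟨s 0 0 x, ds_eq 0 0 x⟩
  · refine ⟨QuotientGroup.quotientKerEquivOfSurjective (d 0 0)
      (fun x => ⟨s 0 0 x, ds_eq 0 0 x⟩), fun x => rfl⟩

end
end
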